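/- arXiv:2308.11002 — 8 statements merged into one kernel-verified Lean document; each statement's English description precedes it below -/
import Mathlib

section
/- Let b be a fixed non-zero integer, let A_1,...,A_r be fixed positive integers, and let d be an integer with d > r ≥ 1. Then the equation b·(n_1!·A_1^{n_1})·(n_2!·A_2^{n_2})···(n_r!·A_r^{n_r}) = x^d has only finitely many solutions in positive integers n_1,...,n_r and integers x. -/
private lemma key_bound (r : ℕ) (b : ℤ) (hb : b ≠ 0)
    (A : Fin r → ℕ) (hA : ∀ i, 0 < A i) (d : ℕ) (hd : r < d) :
    ∃ N : ℕ, ∀ (n : Fin r → ℕ) (x : ℤ), (∀ i, 0 < n i) →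
      b * ∏ i, (((n i).factorial : ℤ) * (A i : ℤ) ^ (n i)) = x ^ d → ∀ i, n i ≤ N := by
  classical
  set C : ℕ := max b.natAbs (Finset.univ.sup A) with hC
  refine ⟨2 * C + 1, fun n x hn heq j => ?_⟩
  by_contra hj
  push_neg at hj
  -- M is the maximum of the n i
  set M : ℕ := Finset.univ.sup n with hM
  have hjM : n j ≤ M := Finset.le_sup (Finset.mem_univ j)
  have hMbig : 2 * C + 2 ≤ M := by omega
  obtain ⟨i0, -, hi0⟩ := Finset.exists_mem_eq_sup Finset.univ ⟨j, Finset.mem_univ j⟩ n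
  -- Bertrand prime
  set m : ℕ := M / 2 with hm
  have hm0 : m ≠ 0 := by omega
  obtain ⟨p, hp, hmp, hp2m⟩ := Nat.exists_prime_lt_and_le_two_mul m hm0
  haveI : Fact p.Prime := ⟨hp⟩
  have hpM : p ≤ M := by omega
  have hM2p : M < 2 * p := by omega
  have hpC : C < p := by omega
  -- Pass to natural numbers via natAbs
  set P : ℕ := ∏ i, (n i).factorial * A i ^ (n i) with hP
  have hterm0 : ∀ i, (n i).factorial * A i ^ (n i) ≠ 0 :=
    fun i => Nat.mul_ne_zero (Nat.factorial_ne_zero _) (pow_ne_zero _ (hA i).ne')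
  have hP0 : P ≠ 0 := Finset.prod_ne_zero_iff.2 fun i _ => hterm0 i
  have heqN : b.natAbs * P = x.natAbs ^ d := by
    have h1 : (b * ∏ i, (((n i).factorial : ℤ) * (A i : ℤ) ^ (n i))).natAbs
        = (x ^ d).natAbs := by rw [heq]
    rwa [Int.natAbs_mul, Int.natAbs_pow, show (∏ i, (((n i).factorial : ℤ) * (A i : ℤ) ^ (n i))) = (P : ℤ) by push_cast [hP]; ring] at h1
  have hb0 : b.natAbs ≠ 0 := Int.natAbs_ne_zero.2 hb
  -- factorization at p
  have hfb : b.natAbs.factorization p = 0 := by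
    apply Nat.factorization_eq_zero_of_not_dvd
    intro hdvd
    have h1 := Nat.le_of_dvd (Nat.pos_of_ne_zero hb0) hdvd
    have h2 : b.natAbs ≤ C := le_max_left _ _
    omega
  have hfA : ∀ i, (A i).factorization p = 0 := by
    intro i
    apply Nat.factorization_eq_zero_of_not_dvd
    intro hdvd
    have h1 := Nat.le_of_dvd (hA i) hdvd
    have h2 : A i ≤ Finset.univ.sup A := Finset.le_sup (Finset.mem_univ i)
    have h3 : A i ≤ C := h2.trans (le_max_right _ _)
    omega
  have hfact : ∀ i, ((n i).factorial).factorization p = n i / p := by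
    intro i
    have hni : n i ≤ M := Finset.le_sup (Finset.mem_univ i)
    have hlog : Nat.log p (n i) < 2 := by
      apply Nat.log_lt_of_lt_pow (hn i).ne'
      have := hp.two_le
      calc n i ≤ M := hni
        _ < 2 * p := hM2p
        _ ≤ p * p := by nlinarith
        _ = p ^ 2 := by ring
    rw [Nat.factorization_def _ hp, padicValNat_factorial hlog]
    simp [Finset.sum_Ico_eq_sum_range]
  have hterm : ∀ i, ((n i).factorial * A i ^ (n i)).factorization p = n i / p := by
    intro i
    rw [Nat.factorization_mul (Nat.factorial_ne_zero _) (pow_ne_zero _ (hA i).ne'),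
      Nat.factorization_pow]
    simp [Finsupp.add_apply, Finsupp.smul_apply, hfact i, hfA i]
  have hPfact : P.factorization p = ∑ i, n i / p := by
    rw [hP, Nat.factorization_prod (fun i _ => hterm0 i)]
    simp only [Finsupp.coe_finset_sum, Finset.sum_apply]
    exact Finset.sum_congr rfl fun i _ => hterm i
  have hsum : (b.natAbs * P).factorization p = ∑ i, n i / p := by
    rw [Nat.factorization_mul hb0 hP0]
    simp [Finsupp.add_apply, hfb, hPfact]
  have hrhs : (x.natAbs ^ d).factorization p = d * x.natAbs.factorization p := by
    rw [Nat.factorization_pow]; simp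
  have key : ∑ i, n i / p = d * x.natAbs.factorization p := by
    rw [← hsum, ← hrhs, heqN]
  -- bounds on the sum
  have hub : ∑ i, n i / p ≤ r := by
    calc ∑ i, n i / p ≤ ∑ _i : Fin r, 1 := by
          apply Finset.sum_le_sum
          intro i _
          have hni : n i ≤ M := Finset.le_sup (Finset.mem_univ i)
          have h2 : n i < 2 * p := by omega
          have := (Nat.div_lt_iff_lt_mul hp.pos).2 h2
          omega
      _ = r := by simp
  have hlb : 1 ≤ ∑ i, n i / p := by
    have h1 : n i0 / p = 1 := by
      have ha : p ≤ n i0 := by omega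
      have hb2 : n i0 < 2 * p := by omega
      have := (Nat.div_lt_iff_lt_mul hp.pos).2 hb2
      have := Nat.div_le_div_right (c := p) ha
      rw [Nat.div_self hp.pos] at this
      omega
    calc 1 = n i0 / p := h1.symm
      _ ≤ ∑ i, n i / p := Finset.single_le_sum (f := fun i => n i / p) (fun i _ => Nat.zero_le _) (Finset.mem_univ i0)
  rcases Nat.eq_zero_or_pos (x.natAbs.factorization p) with hv | hv
  · rw [hv, Nat.mul_zero] at key
    omega
  · have : d ≤ d * x.natAbs.factorization p := Nat.le_mul_of_pos_right d hv
    omega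

/-- For a fixed non-zero integer `b`, fixed positive integers `A 0, ..., A (r-1)`
and an integer `d > r ≥ 1`, the equation
`b * (n₁! A₁^{n₁}) ⋯ (n_r! A_r^{n_r}) = x ^ d` has only finitely many solutions in
positive integers `n₁, ..., n_r` and integers `x`. -/
theorem stmt_0 (r : ℕ) (hr : 1 ≤ r) (b : ℤ) (hb : b ≠ 0)
    (A : Fin r → ℕ) (hA : ∀ i, 0 < A i) (d : ℕ) (hd : r < d) :
    {p : (Fin r → ℕ) × ℤ | (∀ i, 0 < p.1 i) ∧
      b * ∏ i, (((p.1 i).factorial : ℤ) * (A i : ℤ) ^ (p.1 i)) = p.2 ^ d}.Finite := by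
  classical
  obtain ⟨N, hN⟩ := key_bound r b hb A hA d hd
  set B : ℕ := b.natAbs * ∏ i, N.factorial * A i ^ N with hB
  apply Set.Finite.subset
    (Set.Finite.prod (Set.Finite.pi (fun _ : Fin r => Set.finite_Iic N))
      (Set.finite_Icc (-(B : ℤ)) (B : ℤ)))
  rintro ⟨n, x⟩ ⟨hpos, heq⟩
  have hnN : ∀ i, n i ≤ N := hN n x hpos heq
  constructor
  · intro i _
    exact hnN i
  · simp only [Set.mem_Icc]
    rw [← abs_le]
    set P : ℕ := ∏ i, (n i).factorial * A i ^ (n i) with hP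
    have heqN : b.natAbs * P = x.natAbs ^ d := by
      have h1 : (b * ∏ i, (((n i).factorial : ℤ) * (A i : ℤ) ^ (n i))).natAbs
          = (x ^ d).natAbs := by rw [heq]
      rwa [Int.natAbs_mul, Int.natAbs_pow, show (∏ i, (((n i).factorial : ℤ) * (A i : ℤ) ^ (n i))) = (P : ℤ) by push_cast [hP]; ring] at h1
    have hPB : P ≤ ∏ i, N.factorial * A i ^ N := by
      apply Finset.prod_le_prod (fun i _ => Nat.zero_le _)
      intro i _
      exact Nat.mul_le_mul (Nat.factorial_le (hnN i))
        (Nat.pow_le_pow_right (hA i) (hnN i))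
    have hxB : x.natAbs ^ d ≤ B := by
      rw [← heqN, hB]
      exact Nat.mul_le_mul_left _ hPB
    have hx : x.natAbs ≤ B := by
      rcases Nat.eq_zero_or_pos x.natAbs with h | h
      · omega
      · calc x.natAbs = x.natAbs ^ 1 := (pow_one _).symm
          _ ≤ x.natAbs ^ d := Nat.pow_le_pow_right h (by omega)
          _ ≤ B := hxB
    calc |x| = (x.natAbs : ℤ) := (Int.abs_eq_natAbs x)
      _ ≤ (B : ℤ) := by exact_mod_cast hx
end

section
/- Let b be a fixed non-zero integer, let A_1,...,A_r be fixed positive integers, and let d be an integer with 1 ≤ d ≤ r. If it is not the case that b < 0 and d is even, then the equation b·(n_1!·A_1^{n_1})·(n_2!·A_2^{n_2})···(n_r!·A_r^{n_r}) = x^d has infinitely many solutions in positive integers n_1,...,n_r and integers x. If b < 0 and d is even, the equation has no such solutions. -/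
/-!
Take `n i = k + 1` for `i < e`, `n e = k` and `n i = 1` for `i > e`, which needs `d = e + 1 ≤ r`.
Since `(k + 1)! ^ e * k ! = (k + 1) ^ e * k ! ^ d`, when `d ∣ k + 1` the left-hand side is
`b * C' * (k + 1) ^ e` times a `d`-th power, where `C' = (∏_{i > e} A i) * A e ^ e`. With
`C = |b| * C'`, the choice `k + 1 = C * (d * u) ^ d` gives
`C * (k + 1) ^ e = (C * (d * u) ^ e) ^ d`.
The sign of `b` is absorbed by `x ↦ -x` when `d` is odd; when `d` is even and `b < 0` the left-hand
side is negative.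
-/

open Finset Nat

theorem Nat.factorial_succ_pow_mul_factorial (k e : ℕ) :
    (k + 1)! ^ e * k ! = (k + 1) ^ e * k ! ^ (e + 1) := by
  rw [factorial_succ, mul_pow]; ring

theorem mul_mul_pow_pow_eq_pow (C s e : ℕ) : C * (C * s ^ (e + 1)) ^ e = (C * s ^ e) ^ (e + 1) := by
  rw [mul_pow, mul_pow, ← pow_mul, ← pow_mul]; ring

theorem factorial_pow_mul_pow_eq_mul_pow {k e L : ℕ} (hk : k + 1 = (e + 1) * (L + 1)) (R a P : ℕ) :
    (k + 1)! ^ e * R ^ (k + 1) * (k ! * a ^ k) * P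
      = P * a ^ e * (k + 1) ^ e * (k ! * R ^ (L + 1) * a ^ L) ^ (e + 1) := by
  have hR : R ^ (k + 1) = (R ^ (L + 1)) ^ (e + 1) := by rw [hk, pow_mul']
  have ha : a ^ k = (a ^ L) ^ (e + 1) * a ^ e := by
    rw [show k = (e + 1) * L + e by linarith, pow_add, pow_mul']
  calc (k + 1)! ^ e * R ^ (k + 1) * (k ! * a ^ k) * P
      = ((k + 1)! ^ e * k !) * P * a ^ e * (R ^ (L + 1) * a ^ L) ^ (e + 1) := by
        rw [hR, ha]; ring
    _ = _ := by rw [factorial_succ_pow_mul_factorial]; ring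

theorem exists_mul_eq_pow_of_natAbs_mul {b y X : ℤ} {d : ℕ} (h : ¬(b < 0 ∧ Even d))
    (hX : (b.natAbs : ℤ) * y = X ^ d) : ∃ x : ℤ, b * y = x ^ d := by
  rcases le_or_gt 0 b with hb | hb
  · exact ⟨X, by rwa [Int.natAbs_of_nonneg hb] at hX⟩
  · have hd : Odd d := Nat.not_even_iff_odd.mp fun hd => h ⟨hb, hd⟩
    refine ⟨-X, ?_⟩
    rw [Int.ofNat_natAbs_of_nonpos hb.le] at hX
    rw [hd.neg_pow, ← hX]; ring

section Profile

variable {ι : Type*} [LinearOrder ι]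

def stairProfile (j : ι) (k : ℕ) (i : ι) : ℕ :=
  if i < j then k + 1 else if i = j then k else 1

@[simp]
theorem stairProfile_self (j : ι) (k : ℕ) : stairProfile j k j = k := by
  simp [stairProfile]

theorem stairProfile_pos {k : ℕ} (hk : 0 < k) (j i : ι) : 0 < stairProfile j k i := by
  unfold stairProfile
  split_ifs <;> omega

theorem stairProfile_injective (j : ι) : Function.Injective (stairProfile j) :=
  fun k l h => by simpa using congrFun h j

variable [Fintype ι] [LocallyFiniteOrderBot ι] [LocallyFiniteOrderTop ι]

theorem Finset.prod_ite_lt_ite_eq {M : Type*} [CommMonoid M] (j : ι) (x z : ι → M) (y : M) :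
    ∏ i, (if i < j then x i else if i = j then y else z i)
      = (∏ i ∈ Iio j, x i) * y * ∏ i ∈ Ioi j, z i := by
  rw [prod_ite, filter_gt_eq_Iio, mul_assoc]
  congr 1
  have hIci : ({i | ¬i < j} : Finset ι) = Ici j := by ext; simp
  rw [hIci, Ici_eq_cons_Ioi, prod_cons, if_pos rfl]
  congr 1
  exact prod_congr rfl fun i hi => if_neg (mem_Ioi.mp hi).ne'

theorem prod_factorial_mul_pow_stairProfile (A : ι → ℕ) (j : ι) (k : ℕ) :
    ∏ i, (stairProfile j k i)! * A i ^ stairProfile j k i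
      = (k + 1)! ^ #(Iio j) * (∏ i ∈ Iio j, A i) ^ (k + 1) * (k ! * A j ^ k)
        * ∏ i ∈ Ioi j, A i := by
  have hterm : ∀ i, (stairProfile j k i)! * A i ^ stairProfile j k i
      = if i < j then (k + 1)! * A i ^ (k + 1) else if i = j then k ! * A j ^ k else A i := by
    intro i
    unfold stairProfile
    split_ifs <;> simp_all
  rw [prod_congr rfl fun i _ => hterm i, prod_ite_lt_ite_eq, prod_mul_distrib, prod_const,
    prod_pow]

theorem exists_mul_prod_stairProfile_eq_pow (A : ι → ℕ) (j : ι) (B u k : ℕ)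
    (hk : k + 1 = B * (∏ i ∈ Ioi j, A i) * A j ^ #(Iio j) * ((#(Iio j) + 1) * u) ^ (#(Iio j) + 1)) :
    ∃ X, B * ∏ i, (stairProfile j k i)! * A i ^ stairProfile j k i = X ^ (#(Iio j) + 1) := by
  set e := #(Iio j)
  set C := B * (∏ i ∈ Ioi j, A i) * A j ^ e with hC
  have hkM : k + 1 = (e + 1) * (C * ((e + 1) ^ e * u ^ (e + 1))) := by
    rw [hk, mul_pow, pow_succ]; ring
  obtain ⟨L, hL⟩ : ∃ L, C * ((e + 1) ^ e * u ^ (e + 1)) = L + 1 :=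
    Nat.exists_eq_add_one.mpr (Nat.pos_of_ne_zero fun h => by rw [h, mul_zero] at hkM; omega)
  rw [prod_factorial_mul_pow_stairProfile, factorial_pow_mul_pow_eq_mul_pow (hL ▸ hkM)]
  set Y := k ! * (∏ i ∈ Iio j, A i) ^ (L + 1) * A j ^ L
  refine ⟨C * ((e + 1) * u) ^ e * Y, ?_⟩
  calc B * ((∏ i ∈ Ioi j, A i) * A j ^ e * (k + 1) ^ e * Y ^ (e + 1))
      = C * (k + 1) ^ e * Y ^ (e + 1) := by rw [hC]; ring
    _ = _ := by rw [hk, mul_mul_pow_pow_eq_pow, mul_pow _ Y]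

theorem infinite_setOf_mul_prod_factorial_mul_pow_eq_pow {A : ι → ℕ} (hA : ∀ i, 0 < A i) (j : ι)
    {b : ℤ} (hb : b ≠ 0) (hsign : ¬(b < 0 ∧ Even (#(Iio j) + 1))) :
    {n : ι → ℕ | (∀ i, 0 < n i) ∧
      ∃ x : ℤ, b * ∏ i, ((n i)! : ℤ) * (A i : ℤ) ^ n i = x ^ (#(Iio j) + 1)}.Infinite := by
  set e := #(Iio j)
  set C := b.natAbs * (∏ i ∈ Ioi j, A i) * A j ^ e
  have hC : 0 < C := by
    have := prod_pos fun i (_ : i ∈ Ioi j) => hA i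
    have := hA j
    positivity
  set k : ℕ → ℕ := fun t => C * ((e + 1) * (t + 2)) ^ (e + 1) - 1
  have hk : ∀ t, k t + 1 = C * ((e + 1) * (t + 2)) ^ (e + 1) := fun t =>
    Nat.sub_add_cancel (Nat.one_le_iff_ne_zero.mpr (by positivity))
  have hk_pos : ∀ t, 0 < k t := fun t => by
    have : 1 < ((e + 1) * (t + 2)) ^ (e + 1) := Nat.one_lt_pow (by omega) (by nlinarith)
    nlinarith [hk t]
  have hk_mono : StrictMono fun t => k t + 1 := fun s t hst => by
    simp only [hk]
    gcongr
  have hk_inj : Function.Injective k := fun s t h => hk_mono.injective (congrArg (· + 1) h)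
  refine (Set.infinite_range_of_injective ((stairProfile_injective j).comp hk_inj)).mono ?_
  rintro _ ⟨t, rfl⟩
  obtain ⟨X, hX⟩ := exists_mul_prod_stairProfile_eq_pow A j b.natAbs (t + 2) (k t) (hk t)
  have hX' : (b.natAbs : ℤ) * ∏ i, ((stairProfile j (k t) i)! : ℤ) *
      (A i : ℤ) ^ stairProfile j (k t) i
      = (X : ℤ) ^ (e + 1) := by exact_mod_cast hX
  exact ⟨stairProfile_pos (hk_pos t) j, exists_mul_eq_pow_of_natAbs_mul hsign hX'⟩

end Profile

theorem mul_prod_factorial_mul_pow_ne_pow {ι : Type*} [Fintype ι] {A : ι → ℕ} (hA : ∀ i, 0 < A i)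
    {b : ℤ} (hb : b < 0) {d : ℕ} (hd : Even d) (n : ι → ℕ) (x : ℤ) :
    b * ∏ i, ((n i)! : ℤ) * (A i : ℤ) ^ n i ≠ x ^ d := by
  have hprod : 0 < ∏ i, ((n i)! : ℤ) * (A i : ℤ) ^ n i :=
    prod_pos fun i _ => mul_pos (by positivity) (pow_pos (by exact_mod_cast hA i) _)
  exact (mul_neg_of_neg_of_pos hb hprod).trans_le (hd.pow_nonneg x) |>.ne

/-- For a fixed non-zero integer `b`, fixed positive integers `A 0, ..., A (r-1)`
and an integer `d` with `1 ≤ d ≤ r`: if it is not the case that `b < 0` and `d` is even, then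
`b * (n₁! A₁^{n₁}) ⋯ (n_r! A_r^{n_r}) = x ^ d` has infinitely many solutions in positive
integers `n₁, ..., n_r` and integers `x`; if `b < 0` and `d` is even, it has no such solutions. -/
theorem stmt_1 (r : ℕ) (b : ℤ) (hb : b ≠ 0)
    (A : Fin r → ℕ) (hA : ∀ i, 0 < A i) (d : ℕ) (hd1 : 1 ≤ d) (hd2 : d ≤ r) :
    (¬(b < 0 ∧ Even d) →
      {p : (Fin r → ℕ) × ℤ | (∀ i, 0 < p.1 i) ∧
        b * ∏ i, (((p.1 i).factorial : ℤ) * (A i : ℤ) ^ (p.1 i)) = p.2 ^ d}.Infinite) ∧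
    ((b < 0 ∧ Even d) →
      {p : (Fin r → ℕ) × ℤ | (∀ i, 0 < p.1 i) ∧
        b * ∏ i, (((p.1 i).factorial : ℤ) * (A i : ℤ) ^ (p.1 i)) = p.2 ^ d} = ∅) := by
  refine ⟨fun hsign => ?_, fun ⟨hneg, heven⟩ => ?_⟩
  · obtain ⟨e, rfl⟩ : ∃ e, d = e + 1 := ⟨d - 1, by omega⟩
    have hj : #(Iio (⟨e, hd2⟩ : Fin r)) = e := Fin.card_Iio _
    have hinf := infinite_setOf_mul_prod_factorial_mul_pow_eq_pow hA ⟨e, hd2⟩ hb (by rwa [hj])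
    rw [hj] at hinf
    refine Set.Infinite.of_image Prod.fst (hinf.mono ?_)
    rintro n ⟨hn, x, hx⟩
    exact ⟨(n, x), ⟨hn, hx⟩, rfl⟩
  · exact Set.eq_empty_of_forall_notMem fun p hp =>
      mul_prod_factorial_mul_pow_ne_pow hA hneg heven p.1 p.2 hp.2
end

section
/- Let f(x,y) = a_d·x^d + a_{d-1}·x^{d-1}·y + ··· + a_1·x·y^{d-1} + a_0·y^d be a homogeneous polynomial of degree d ≥ 1 with integer coefficients, and assume that a_0 + a_1 + ··· + a_d > 0, or a_0 > 0, or a_d > 0. Let b be a fixed positive integer, A_1,...,A_r fixed positive integers, and assume d ≤ r. Then the equation b·(n_1!·A_1^{n_1})···(n_r!·A_r^{n_r}) = f(x,y) has infinitely many solutions in positive integers n_1,...,n_r and integers x, y. -/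
open Finset

lemma alg2 (e b' c' R C B0 K D Q M : ℕ) (hQ1 : 1 ≤ Q)
    (hD : D = b' * R * C ^ e)
    (hQ : Q = c' * D ^ e * (e + 1) ^ e * K ^ (e + 1))
    (hM : M = Q * (e + 1)) :
    b' * (M.factorial * B0 ^ M * ((M - 1).factorial ^ e * C ^ (M - 1)) * R)
      = c' * ((M - 1).factorial * B0 ^ Q * C ^ (Q - 1) * D * (e + 1) * K) ^ (e + 1) := by
  subst hM hD
  obtain ⟨Q', rfl⟩ : ∃ Q', Q = Q' + 1 := ⟨Q - 1, by omega⟩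
  rw [Nat.add_sub_cancel]
  rw [← Nat.mul_factorial_pred (by positivity)]
  rw [pow_mul]
  have hsub : (Q' + 1) * (e + 1) - 1 = Q' * (e + 1) + e := by
    have : (Q' + 1) * (e + 1) = Q' * (e + 1) + e + 1 := by ring
    omega
  rw [hsub, show C ^ (Q' * (e + 1) + e) = (C ^ Q') ^ (e + 1) * C ^ e from by
    rw [pow_add, pow_mul]]
  generalize (Q' * (e + 1) + e).factorial = F
  generalize B0 ^ (Q' + 1) = X
  generalize C ^ Q' = Y
  rw [hQ]
  simp only [mul_pow, pow_succ]
  ring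

lemma aux_key (d r : ℕ) (hd : 1 ≤ d) (hdr : d ≤ r) (b : ℤ) (hb : 0 < b)
    (A : Fin r → ℕ) (hA : ∀ i, 0 < A i) (c : ℤ) (hc : 0 < c) :
    ∃ g : ℕ → (Fin r → ℕ) × ℤ, Function.Injective (fun k => (g k).1) ∧ ∀ k,
      (∀ i, 0 < (g k).1 i) ∧
      b * ∏ i, (((g k).1 i).factorial : ℤ) * ((A i : ℤ)) ^ ((g k).1 i)
        = c * (g k).2 ^ d := by
  obtain ⟨e, rfl⟩ : ∃ e, d = e + 1 := ⟨d - 1, by omega⟩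
  set b' := b.toNat with hb'def
  set c' := c.toNat with hc'def
  have hbb : (b' : ℤ) = b := Int.toNat_of_nonneg hb.le
  have hcc : (c' : ℤ) = c := Int.toNat_of_nonneg hc.le
  have hb1 : 1 ≤ b' := by omega
  have hc1 : 1 ≤ c' := by omega
  set B : ℕ → ℕ := fun i => if h : i < r then A ⟨i, h⟩ else 1 with hBdef
  have hB1 : ∀ i, 1 ≤ B i := by
    intro i
    simp only [hBdef]
    split
    · exact hA _
    · exact le_refl 1
  set R := ∏ i ∈ range (r - (e + 1)), B ((e + 1) + i) with hRdef
  set C := ∏ i ∈ range e, B (1 + i) with hCdef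
  have hR1 : 1 ≤ R := Finset.one_le_prod' fun i _ => hB1 _
  have hC1 : 1 ≤ C := Finset.one_le_prod' fun i _ => hB1 _
  set D := b' * R * C ^ e with hDdef
  have hD1 : 0 < D := by
    rw [hDdef]; exact Nat.mul_pos (Nat.mul_pos hb1 hR1) (pow_pos hC1 e)
  have hq1 : ∀ k : ℕ, 0 < c' * D ^ e * (e + 1) ^ e * (k + 1) ^ (e + 1) := by
    intro k
    exact Nat.mul_pos (Nat.mul_pos (Nat.mul_pos hc1 (pow_pos hD1 e))
      (pow_pos (by omega) e)) (pow_pos (by omega) (e + 1))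
  -- abbreviations as functions
  let q : ℕ → ℕ := fun k => c' * D ^ e * (e + 1) ^ e * (k + 1) ^ (e + 1)
  let m : ℕ → ℕ := fun k => q k * (e + 1)
  have hm1 : ∀ k, 1 ≤ m k := fun k => Nat.mul_pos (hq1 k) (by omega)
  let T : ℕ → ℕ := fun k =>
    (m k - 1).factorial * B 0 ^ (q k) * C ^ (q k - 1) * D * (e + 1) * (k + 1)
  let n : ℕ → Fin r → ℕ := fun k i =>
    if (i : ℕ) = 0 then m k else if (i : ℕ) < e + 1 then m k - 1 else 1
  refine ⟨fun k => (n k, (T k : ℤ)), ?_, ?_⟩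
  · -- injectivity
    intro k1 k2 h
    simp only at h
    have h0 : n k1 ⟨0, lt_of_lt_of_le (by omega) hdr⟩
        = n k2 ⟨0, lt_of_lt_of_le (by omega) hdr⟩ := by rw [h]
    simp only [n, if_pos rfl] at h0
    have hq : q k1 = q k2 := Nat.eq_of_mul_eq_mul_right (by omega) h0
    simp only [q] at hq
    have hpos : 0 < c' * D ^ e * (e + 1) ^ e :=
      Nat.mul_pos (Nat.mul_pos hc1 (pow_pos hD1 e)) (pow_pos (by omega) e)
    have h2 : (k1 + 1) ^ (e + 1) = (k2 + 1) ^ (e + 1) :=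
      Nat.eq_of_mul_eq_mul_left hpos hq
    have := Nat.pow_left_injective (by omega) h2
    omega
  · intro k
    have hmk := hm1 k
    have hqk := hq1 k
    refine ⟨?_, ?_⟩
    · intro i
      simp only [n]
      split
      · omega
      · split
        · rename_i h1 h2
          have he1 : 1 ≤ e := by omega
          have h2q : 2 ≤ m k := by
            have : 1 * 2 ≤ q k * (e + 1) := Nat.mul_le_mul hqk (by omega)
            simpa [m] using this
          omega
        · omega
    · -- main equation
      let n' : ℕ → ℕ := fun i => if i = 0 then m k else if i < e + 1 then m k - 1 else 1
      have hcast : (∏ i : Fin r, (((n k i).factorial : ℤ) * ((A i : ℤ)) ^ (n k i)))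
          = ((∏ i ∈ range r, (n' i).factorial * B i ^ (n' i) : ℕ) : ℤ) := by
        push_cast
        rw [← Fin.prod_univ_eq_prod_range (fun i => ((n' i).factorial : ℤ) * (B i : ℤ) ^ (n' i)) r]
        refine Finset.prod_congr rfl fun i _ => ?_
        have hBi : B (i : ℕ) = A i := by simp [hBdef, i.2]
        have hni : n' (i : ℕ) = n k i := rfl
        rw [hBi, hni]
      have key : b' * ∏ i ∈ range r, (n' i).factorial * B i ^ (n' i)
          = c' * T k ^ (e + 1) := by
        have hsplit : r = (1 + e) + (r - (e + 1)) := by omega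
        rw [hsplit, Finset.prod_range_add, Finset.prod_range_add, Finset.prod_range_one]
        have h1 : n' 0 = m k := rfl
        have h2 : ∀ i ∈ range e, (n' (1 + i)).factorial * B (1 + i) ^ (n' (1 + i))
            = (m k - 1).factorial * B (1 + i) ^ (m k - 1) := by
          intro i hi
          rw [mem_range] at hi
          have : n' (1 + i) = m k - 1 := by simp only [n']; rw [if_neg (by omega), if_pos (by omega)]
          rw [this]
        have h3 : ∀ i ∈ range (r - (e + 1)),
            (n' ((1 + e) + i)).factorial * B ((1 + e) + i) ^ (n' ((1 + e) + i))
            = B ((e + 1) + i) := by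
          intro i hi
          have hn3 : n' ((1 + e) + i) = 1 := by
            simp only [n']; rw [if_neg (by omega), if_neg (by omega)]
          rw [hn3, show (1 + e) + i = (e + 1) + i from by omega]
          simp [Nat.factorial_one]
        rw [Finset.prod_congr rfl h2, Finset.prod_congr rfl h3, ← hRdef]
        rw [Finset.prod_mul_distrib, Finset.prod_const, Finset.prod_pow, ← hCdef]
        rw [h1, Finset.card_range]
        have := alg2 e b' c' R C (B 0) (k + 1) D (q k) (m k) (hq1 k) hDdef rfl rfl
        calc b' * ((m k).factorial * B 0 ^ m k * ((m k - 1).factorial ^ e * C ^ (m k - 1)) * R)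
            = c' * ((m k - 1).factorial * B 0 ^ (q k) * C ^ (q k - 1) * D * (e + 1) * (k + 1)) ^ (e + 1) := this
          _ = c' * T k ^ (e + 1) := rfl
      rw [hcast, ← hbb, ← hcc]
      rw [← Nat.cast_mul, key]
      push_cast
      ring


/-- Let `f(x,y) = a_d x^d + a_{d-1} x^{d-1} y + ⋯ + a_1 x y^{d-1} + a_0 y^d` be a
homogeneous polynomial of degree `d ≥ 1` with integer coefficients such that
`a_0 + ⋯ + a_d > 0` or `a_0 > 0` or `a_d > 0`. For a fixed positive integer `b`, fixed positive
integers `A 0, ..., A (r-1)` and `d ≤ r`, the equation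
`b * (n₁! A₁^{n₁}) ⋯ (n_r! A_r^{n_r}) = f(x,y)` has infinitely many solutions in positive
integers `n₁, ..., n_r` and integers `x, y`. -/
theorem stmt_10 (d : ℕ) (hd : 1 ≤ d) (a : ℕ → ℤ)
    (ha : 0 < ∑ i ∈ Finset.range (d + 1), a i ∨ 0 < a 0 ∨ 0 < a d)
    (r : ℕ) (b : ℤ) (hb : 0 < b) (A : Fin r → ℕ) (hA : ∀ i, 0 < A i) (hdr : d ≤ r) :
    {p : (Fin r → ℕ) × ℤ × ℤ | (∀ i, 0 < p.1 i) ∧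
      b * ∏ i, (((p.1 i).factorial : ℤ) * (A i : ℤ) ^ (p.1 i)) =
        ∑ i ∈ Finset.range (d + 1), a i * p.2.1 ^ i * p.2.2 ^ (d - i)}.Infinite := by
  rcases ha with hc | hc | hc
  · obtain ⟨g, hginj, hg⟩ := aux_key d r hd hdr b hb A hA _ hc
    apply Set.infinite_of_injective_forall_mem
      (f := fun k => ((g k).1, (g k).2, (g k).2))
    · intro k1 k2 h
      simp only [Prod.mk.injEq] at h
      exact hginj h.1
    · intro k
      obtain ⟨hpos, heq⟩ := hg k
      refine ⟨hpos, ?_⟩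
      rw [heq]
      rw [Finset.sum_mul]
      refine (Finset.sum_congr rfl fun i hi => ?_).symm
      rw [Finset.mem_range] at hi
      rw [mul_assoc, ← pow_add, show i + (d - i) = d from by omega]
  · obtain ⟨g, hginj, hg⟩ := aux_key d r hd hdr b hb A hA _ hc
    apply Set.infinite_of_injective_forall_mem
      (f := fun k => ((g k).1, (0 : ℤ), (g k).2))
    · intro k1 k2 h
      simp only [Prod.mk.injEq] at h
      exact hginj h.1
    · intro k
      obtain ⟨hpos, heq⟩ := hg k
      refine ⟨hpos, ?_⟩
      rw [heq]
      rw [Finset.sum_eq_single 0]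
      · simp
      · intro i _ hi0
        rw [zero_pow hi0, mul_zero, zero_mul]
      · intro h
        exact absurd (Finset.mem_range.mpr (by omega)) h
  · obtain ⟨g, hginj, hg⟩ := aux_key d r hd hdr b hb A hA _ hc
    apply Set.infinite_of_injective_forall_mem
      (f := fun k => ((g k).1, (g k).2, (0 : ℤ)))
    · intro k1 k2 h
      simp only [Prod.mk.injEq] at h
      exact hginj h.1
    · intro k
      obtain ⟨hpos, heq⟩ := hg k
      refine ⟨hpos, ?_⟩
      rw [heq]
      rw [Finset.sum_eq_single d]
      · simp
      · intro i hi hi0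
        rw [Finset.mem_range] at hi
        rw [zero_pow (show d - i ≠ 0 from by omega), mul_zero]
      · intro h
        exact absurd (Finset.mem_range.mpr (by omega)) h
end

section
/- Assume the weak form of Szpiro's conjecture. Let s be a fixed positive integer and let f(x,y) = x^{2s}·y^s + y^{2s}·x^s (respectively f(x,y) = x^{2s}·y^s − y^{2s}·x^s), and assume f(x,y) has at least three pairwise non-proportional linear factors over ℂ. Let p_1 < p_2 < ··· < p_q be primes, b a fixed non-zero integer, and A_1,...,A_l fixed positive integers. Then the equation b·p_1^{z_1}···p_q^{z_q}·(n_1!·A_1^{n_1})···(n_l!·A_l^{n_l}) = f(x,y) has only finitely many solutions in integers z_1,...,z_q ≥ 0, positive integers n_1,...,n_l, and integers x, y with gcd(x,y) = 1. -/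
/-!
Write `f(x, y) = x^s y^s (x^s + ε y^s)`. With `A = x^s`, `B = ε y^s`, `C = A + B` (pairwise
coprime because `gcd(x, y) = 1`) one has `A B C = ε f(x, y)`, so Szpiro gives
`|f(x, y)| < rad(f(x, y))^k` for a fixed `k`. On the other side of the equation the radical is
at most a constant times `4^(n₁ + ⋯ + n_l)`: the primes dividing `n!` are at most `n`, and their
product is at most `4^n`. Hence `∏ pⱼ^zⱼ · ∏ nᵢ! < c · d^(n₁ + ⋯ + n_l)` for constants `c, d`;
as `n!` outgrows every exponential this bounds the `nᵢ`, then the `zⱼ`, and finally `x` and `y`,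
which divide the (now bounded, non-zero) value of `f(x, y)`.
-/

/-- The algebraic radical of an integer: the product of the distinct primes dividing it. -/
def rad (m : ℤ) : ℕ := ∏ p ∈ m.natAbs.primeFactors, p

/-- The weak form of Szpiro's conjecture: there is a constant `s > 0` such that for all
non-zero pairwise coprime integers `A, B, C` with `A + B = C` one has
`|A*B*C| < rad (A*B*C) ^ s`. -/
def WeakSzpiroConjecture : Prop :=
  ∃ s : ℝ, 0 < s ∧ ∀ A B C : ℤ, A ≠ 0 → B ≠ 0 → C ≠ 0 →
    IsCoprime A B → IsCoprime A C → IsCoprime B C → A + B = C →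
    ((|A * B * C| : ℤ) : ℝ) < (rad (A * B * C) : ℝ) ^ s

open Finset UniqueFactorizationMonoid
open scoped Nat

lemma rad_eq_radical_natAbs (m : ℤ) : rad m = radical m.natAbs :=
  Nat.radical_eq_prod_primeFactors.symm

lemma Nat.radical_factorial_le_four_pow (n : ℕ) : radical n ! ≤ 4 ^ n := by
  rw [Nat.radical_eq_prod_primeFactors]
  refine (prod_le_prod_of_subset_of_one_le' (fun r hr => ?_) fun r hr _ => ?_).trans
    (primorial_le_four_pow n)
  · have hr' := Nat.prime_of_mem_primeFactors hr
    simpa [Nat.lt_succ_iff, hr', ← hr'.dvd_factorial] using Nat.dvd_of_mem_primeFactors hr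
  · exact (mem_filter.mp hr).2.one_le

lemma radical_mul_prod_pow_mul_prod_factorial_mul_pow_le {κ ι : Type*} [Fintype κ] [Fintype ι]
    (b : ℕ) (p : κ → ℕ) (A : ι → ℕ) (z : κ → ℕ) (n : ι → ℕ) :
    radical (b * (∏ j, p j ^ z j) * ∏ i, ((n i)! * A i ^ n i)) ≤
      radical b * (∏ j, radical (p j)) * (∏ i, radical (A i)) * 4 ^ ∑ i, n i := by
  have hdvd : radical (b * (∏ j, p j ^ z j) * ∏ i, ((n i)! * A i ^ n i)) ∣
      radical b * (∏ j, radical (p j)) * ∏ i, (radical (n i)! * radical (A i)) :=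
    radical_mul_dvd.trans <| mul_dvd_mul
      (radical_mul_dvd.trans <| mul_dvd_mul dvd_rfl <|
        radical_prod_dvd.trans <| prod_dvd_prod_of_dvd _ _ fun _ _ => radical_pow_dvd)
      (radical_prod_dvd.trans <| prod_dvd_prod_of_dvd _ _ fun _ _ =>
        radical_mul_dvd.trans <| mul_dvd_mul dvd_rfl radical_pow_dvd)
  have hpos : 0 < radical b * (∏ j, radical (p j)) * ∏ i, (radical (n i)! * radical (A i)) := by
    have := Nat.radical_pos; positivity
  calc _ ≤ radical b * (∏ j, radical (p j)) * ∏ i, (radical (n i)! * radical (A i)) :=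
        Nat.le_of_dvd hpos hdvd
    _ ≤ radical b * (∏ j, radical (p j)) * ∏ i, (4 ^ n i * radical (A i)) := by
        gcongr with i; exact Nat.radical_factorial_le_four_pow _
    _ = _ := by rw [prod_mul_distrib, prod_pow_eq_pow_sum]; ring

lemma natAbs_mul_prod_pow_mul_prod {κ ι : Type*} [Fintype κ] [Fintype ι] (b : ℤ) (p : κ → ℕ)
    (A : ι → ℕ) (z : κ → ℕ) (n : ι → ℕ) :
    (b * (∏ j, (p j : ℤ) ^ z j) * ∏ i, (((n i)! : ℤ) * (A i : ℤ) ^ n i)).natAbs =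
      b.natAbs * (∏ j, p j ^ z j) * ∏ i, ((n i)! * A i ^ n i) := by
  rw [mul_assoc, Int.natAbs_mul, mul_assoc]
  congr 1
  exact_mod_cast Int.natAbs_natCast ((∏ j, p j ^ z j) * ∏ i, ((n i)! * A i ^ n i))

lemma mul_prod_pow_mul_prod_ne_zero {κ ι : Type*} [Fintype κ] [Fintype ι] {b : ℤ} (hb : b ≠ 0)
    {p : κ → ℕ} (hp : ∀ j, p j ≠ 0) {A : ι → ℕ} (hA : ∀ i, A i ≠ 0) (z : κ → ℕ) (n : ι → ℕ) :
    b * (∏ j, (p j : ℤ) ^ z j) * ∏ i, (((n i)! : ℤ) * (A i : ℤ) ^ n i) ≠ 0 := by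
  simp [hb, prod_ne_zero_iff, Nat.factorial_ne_zero, hp, hA]

lemma Nat.pow_le_factorial_mul_pow_self (D n : ℕ) : D ^ n ≤ n ! * D ^ D := by
  induction n with
  | zero => simpa using Nat.succ_le_of_lt Nat.pow_self_pos
  | succ n ih =>
    rcases le_or_gt D (n + 1) with hD | hD
    · calc D ^ (n + 1) = D * D ^ n := by ring
        _ ≤ (n + 1) * (n ! * D ^ D) := Nat.mul_le_mul hD ih
        _ = (n + 1)! * D ^ D := by rw [Nat.factorial_succ, mul_assoc]
    · calc D ^ (n + 1) ≤ D ^ D := Nat.pow_le_pow_right (by omega) hD.le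
        _ ≤ (n + 1)! * D ^ D := Nat.le_mul_of_pos_left _ (Nat.factorial_pos _)

lemma Nat.finite_setOf_factorial_le_mul_pow (a c : ℕ) : {n : ℕ | n ! ≤ a * c ^ n}.Finite := by
  have h := Nat.eventually_mul_pow_lt_factorial_sub a c 0
  rw [← Nat.cofinite_eq_atTop, Filter.eventually_cofinite] at h
  simpa using h

lemma finite_setOf_prod_factorial_le {ι : Type*} [Fintype ι] (a D : ℕ) :
    {n : ι → ℕ | ∏ i, (n i)! ≤ a * D ^ ∑ i, n i}.Finite := by
  classical
  set K := a * (D ^ D) ^ (Fintype.card ι - 1)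
  refine (Set.Finite.pi fun _ => Nat.finite_setOf_factorial_le_mul_pow K D).subset ?_
  intro n hn i _
  set P := ∏ j ∈ univ.erase i, (n j)!
  -- The factorials `(n j)!`, `j ≠ i`, absorb their powers `D ^ n j` up to the factor `D ^ D`.
  have hrest : ∏ j ∈ univ.erase i, D ^ n j ≤ P * (D ^ D) ^ (Fintype.card ι - 1) := by
    calc ∏ j ∈ univ.erase i, D ^ n j ≤ ∏ j ∈ univ.erase i, ((n j)! * D ^ D) :=
          prod_le_prod' fun j _ => Nat.pow_le_factorial_mul_pow_self D (n j)
      _ = P * (D ^ D) ^ (Fintype.card ι - 1) := by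
          rw [prod_mul_distrib, prod_const, card_erase_of_mem (mem_univ i), card_univ]
  refine Nat.le_of_mul_le_mul_right ?_ (prod_pos fun j _ => Nat.factorial_pos (n j) : 0 < P)
  calc (n i)! * P = ∏ j, (n j)! := mul_prod_erase univ (fun j => (n j)!) (mem_univ i)
    _ ≤ a * D ^ ∑ j, n j := hn
    _ = a * (D ^ n i * ∏ j ∈ univ.erase i, D ^ n j) := by
        rw [← prod_pow_eq_pow_sum, mul_prod_erase univ (fun j => D ^ n j) (mem_univ i)]
    _ ≤ a * (D ^ n i * (P * (D ^ D) ^ (Fintype.card ι - 1))) := by gcongr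
    _ = K * D ^ n i * P := by ring

lemma finite_setOf_prod_pow_le {κ : Type*} [Fintype κ] {p : κ → ℕ} (hp : ∀ j, 1 < p j) (K : ℕ) :
    {z : κ → ℕ | ∏ j, p j ^ z j ≤ K}.Finite := by
  refine (Set.Finite.pi fun _ => Set.finite_Iic K).subset fun z hz j _ => ?_
  calc z j ≤ p j ^ z j := (Nat.lt_pow_self (hp j)).le
    _ ≤ ∏ j, p j ^ z j :=
      single_le_prod' (fun i _ => Nat.one_le_pow _ _ (hp i).pos) (mem_univ j)
    _ ≤ K := hz

lemma finite_setOf_prod_pow_mul_prod_factorial_le {κ ι : Type*} [Fintype κ] [Fintype ι]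
    {p : κ → ℕ} (hp : ∀ j, 1 < p j) (a D : ℕ) :
    {zn : (κ → ℕ) × (ι → ℕ) |
      (∏ j, p j ^ zn.1 j) * ∏ i, (zn.2 i)! ≤ a * D ^ ∑ i, zn.2 i}.Finite := by
  have hpow : ∀ z : κ → ℕ, 0 < ∏ j, p j ^ z j :=
    fun z => prod_pos fun j _ => pow_pos (hp j).pos _
  have hfac : ∀ n : ι → ℕ, 0 < ∏ i, (n i)! := fun n => prod_pos fun i _ => Nat.factorial_pos _
  refine Set.Finite.of_finite_fibers Prod.snd ((finite_setOf_prod_factorial_le a D).subset ?_) ?_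
  · rintro _ ⟨⟨z, n⟩, hzn, rfl⟩
    exact (Nat.le_mul_of_pos_left _ (hpow z)).trans hzn
  · rintro n -
    refine ((finite_setOf_prod_pow_le hp (a * D ^ ∑ i, n i)).image (fun z => (z, n))).subset ?_
    rintro ⟨z, n'⟩ ⟨hzn, rfl : n' = n⟩
    exact ⟨z, (Nat.le_mul_of_pos_right _ (hfac n')).trans hzn, rfl⟩

theorem WeakSzpiroConjecture.exists_natAbs_lt_rad_pow (h : WeakSzpiroConjecture) :
    ∃ k : ℕ, ∀ a b : ℤ, IsCoprime a b → a * b * (a + b) ≠ 0 →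
      (a * b * (a + b)).natAbs < rad (a * b * (a + b)) ^ k := by
  obtain ⟨κ, -, hκ⟩ := h
  refine ⟨⌈κ⌉₊, fun a b hab h0 => ?_⟩
  obtain ⟨hab0, hc⟩ := mul_ne_zero_iff.mp h0
  obtain ⟨ha, hb⟩ := mul_ne_zero_iff.mp hab0
  have hlt := hκ a b (a + b) ha hb hc hab (by simpa using hab.mul_add_left_right 1)
    (by simpa using hab.symm.add_mul_left_right 1) rfl
  have hrad : (1 : ℝ) ≤ rad (a * b * (a + b)) := by
    exact_mod_cast (rad_eq_radical_natAbs _ ▸ Nat.radical_pos _)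
  rw [Int.abs_eq_natAbs, Int.cast_natCast] at hlt
  have := hlt.trans_le (Real.rpow_le_rpow_of_exponent_le hrad (Nat.le_ceil κ))
  rw [Real.rpow_natCast] at this
  exact_mod_cast this

theorem WeakSzpiroConjecture.exists_natAbs_form_lt_rad_pow (h : WeakSzpiroConjecture) (s : ℕ)
    {ε : ℤ} (hε : IsUnit ε) :
    ∃ k : ℕ, ∀ x y : ℤ, IsCoprime x y → x ^ (2 * s) * y ^ s + ε * y ^ (2 * s) * x ^ s ≠ 0 →
      (x ^ (2 * s) * y ^ s + ε * y ^ (2 * s) * x ^ s).natAbs <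
        rad (x ^ (2 * s) * y ^ s + ε * y ^ (2 * s) * x ^ s) ^ k := by
  obtain ⟨k, hk⟩ := h.exists_natAbs_lt_rad_pow
  refine ⟨k, fun x y hxy h0 => ?_⟩
  have hε1 : ε.natAbs = 1 := Int.isUnit_iff_natAbs_eq.mp hε
  have habc : x ^ s * (ε * y ^ s) * (x ^ s + ε * y ^ s) =
      ε * (x ^ (2 * s) * y ^ s + ε * y ^ (2 * s) * x ^ s) := by ring
  have hcop : IsCoprime (x ^ s) (ε * y ^ s) :=
    (isCoprime_mul_unit_left_right hε _ _).mpr hxy.pow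
  have := hk _ _ hcop (habc ▸ mul_ne_zero hε.ne_zero h0)
  rwa [habc, rad_eq_radical_natAbs, Int.natAbs_mul, hε1, one_mul, ← rad_eq_radical_natAbs] at this

lemma natAbs_le_natAbs_form {s : ℕ} (hs : s ≠ 0) {ε x y : ℤ}
    (h : x ^ (2 * s) * y ^ s + ε * y ^ (2 * s) * x ^ s ≠ 0) :
    x.natAbs ≤ (x ^ (2 * s) * y ^ s + ε * y ^ (2 * s) * x ^ s).natAbs ∧
      y.natAbs ≤ (x ^ (2 * s) * y ^ s + ε * y ^ (2 * s) * x ^ s).natAbs := by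
  have hform : x ^ (2 * s) * y ^ s + ε * y ^ (2 * s) * x ^ s =
      x ^ s * y ^ s * (x ^ s + ε * y ^ s) := by ring
  rw [hform] at h ⊢
  constructor
  · calc x.natAbs ≤ (x ^ s).natAbs := by rw [Int.natAbs_pow]; exact Nat.le_self_pow hs _
      _ ≤ _ := Int.natAbs_le_of_dvd_ne_zero ((dvd_mul_right _ _).mul_right _) h
  · calc y.natAbs ≤ (y ^ s).natAbs := by rw [Int.natAbs_pow]; exact Nat.le_self_pow hs _
      _ ≤ _ := Int.natAbs_le_of_dvd_ne_zero ((dvd_mul_left _ _).mul_right _) h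

lemma prod_pow_mul_prod_factorial_lt_of_natAbs_lt_rad_pow {κ ι : Type*} [Fintype κ] [Fintype ι]
    {b : ℤ} (hb : b ≠ 0) (p : κ → ℕ) {A : ι → ℕ} (hA : ∀ i, A i ≠ 0) {k : ℕ} {z : κ → ℕ}
    {n : ι → ℕ}
    (h : (b * (∏ j, (p j : ℤ) ^ z j) * ∏ i, (((n i)! : ℤ) * (A i : ℤ) ^ n i)).natAbs <
      rad (b * (∏ j, (p j : ℤ) ^ z j) * ∏ i, (((n i)! : ℤ) * (A i : ℤ) ^ n i)) ^ k) :
    (∏ j, p j ^ z j) * ∏ i, (n i)! <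
      (radical b.natAbs * (∏ j, radical (p j)) * ∏ i, radical (A i)) ^ k * (4 ^ k) ^ ∑ i, n i := by
  rw [rad_eq_radical_natAbs, natAbs_mul_prod_pow_mul_prod] at h
  calc (∏ j, p j ^ z j) * ∏ i, (n i)! = 1 * (∏ j, p j ^ z j) * ∏ i, (n i)! := by ring
    _ ≤ b.natAbs * (∏ j, p j ^ z j) * ∏ i, ((n i)! * A i ^ n i) := by
        gcongr with i
        · exact Int.natAbs_pos.mpr hb
        · exact Nat.le_mul_of_pos_right _ (pow_pos (Nat.pos_of_ne_zero (hA i)) _)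
    _ < _ := h
    _ ≤ (radical b.natAbs * (∏ j, radical (p j)) * (∏ i, radical (A i)) * 4 ^ ∑ i, n i) ^ k :=
        Nat.pow_le_pow_left (radical_mul_prod_pow_mul_prod_factorial_mul_pow_le _ _ _ _ _) k
    _ = _ := by rw [mul_pow, ← pow_mul, ← pow_mul, mul_comm k]

theorem stmt_11_general (hsz : WeakSzpiroConjecture) (s : ℕ) (hs : 0 < s) (ε : ℤ)
    (hε : ε = 1 ∨ ε = -1)
    (q : ℕ) (p : Fin q → ℕ) (hp : ∀ i, (p i).Prime)
    (b : ℤ) (hb : b ≠ 0) (l : ℕ) (A : Fin l → ℕ) (hA : ∀ i, 0 < A i) :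
    {t : (Fin q → ℕ) × (Fin l → ℕ) × ℤ × ℤ | (∀ j, 0 < t.2.1 j) ∧
      Int.gcd t.2.2.1 t.2.2.2 = 1 ∧
      b * (∏ j, (p j : ℤ) ^ t.1 j) *
          ∏ i, (((t.2.1 i).factorial : ℤ) * (A i : ℤ) ^ (t.2.1 i)) =
        t.2.2.1 ^ (2 * s) * t.2.2.2 ^ s + ε * t.2.2.2 ^ (2 * s) * t.2.2.1 ^ s}.Finite := by
  obtain ⟨k, hk⟩ := hsz.exists_natAbs_form_lt_rad_pow s (Int.isUnit_iff.mpr hε)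
  have hA0 : ∀ i, A i ≠ 0 := fun i => (hA i).ne'
  have hV0 := mul_prod_pow_mul_prod_ne_zero hb (fun j => (hp j).ne_zero) hA0
  set R := radical b.natAbs * (∏ j, radical (p j)) * ∏ i, radical (A i)
  refine Set.Finite.of_finite_fibers (fun t => (t.1, t.2.1))
    ((finite_setOf_prod_pow_mul_prod_factorial_le (fun j => (hp j).one_lt) (R ^ k) (4 ^ k)).subset
      ?_) ?_
  · rintro _ ⟨⟨z, n, x, y⟩, ⟨-, hxy, heq⟩, rfl⟩
    have hlt := hk x y (Int.isCoprime_iff_gcd_eq_one.mpr hxy) (heq ▸ hV0 z n)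
    rw [← heq] at hlt
    exact (prod_pow_mul_prod_factorial_lt_of_natAbs_lt_rad_pow hb p hA0 hlt).le
  · rintro ⟨z, n⟩ -
    set M : ℕ := (b * (∏ j, (p j : ℤ) ^ z j) * ∏ i, (((n i)! : ℤ) * (A i : ℤ) ^ n i)).natAbs
    refine (((Set.finite_Icc (-(M : ℤ)) M).prod (Set.finite_Icc (-(M : ℤ)) M)).image
      fun xy => (z, n, xy)).subset ?_
    rintro ⟨z', n', x, y⟩ ⟨⟨-, -, heq⟩, hzn⟩
    dsimp only at heq
    simp only [Set.mem_preimage, Set.mem_singleton_iff, Prod.mk.injEq] at hzn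
    obtain ⟨rfl, rfl⟩ := hzn
    obtain ⟨hx, hy⟩ := natAbs_le_natAbs_form hs.ne' (heq ▸ hV0 z' n')
    rw [← heq] at hx hy
    exact ⟨(x, y), ⟨⟨by omega, by omega⟩, ⟨by omega, by omega⟩⟩, rfl⟩

/-- Assume the weak form of Szpiro's conjecture. Let `s` be a fixed positive
integer and `f(x,y) = x^{2s} y^s + ε y^{2s} x^s` with `ε = 1` (resp. `ε = -1`), and assume
`f` has at least three pairwise non-proportional linear factors over `ℂ`. Let
`p₁ < ⋯ < p_q` be primes, `b` a fixed non-zero integer and `A 0, ..., A (l-1)` fixed positive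
integers. Then `b p₁^{z₁} ⋯ p_q^{z_q} (n₁! A₁^{n₁}) ⋯ (n_l! A_l^{n_l}) = f(x,y)` has only
finitely many solutions in integers `z₁, ..., z_q ≥ 0`, positive integers `n₁, ..., n_l` and
integers `x, y` with `gcd(x,y) = 1`. -/
theorem stmt_11 (hsz : WeakSzpiroConjecture) (s : ℕ) (hs : 0 < s) (ε : ℤ)
    (hε : ε = 1 ∨ ε = -1)
    (hfac : ∃ c : Fin 3 → ℂ × ℂ, (∀ i, c i ≠ 0) ∧
      (∀ i, (MvPolynomial.C (c i).1 * MvPolynomial.X 0 +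
          MvPolynomial.C (c i).2 * MvPolynomial.X 1) ∣
        ((MvPolynomial.X 0) ^ (2 * s) * (MvPolynomial.X 1) ^ s +
          MvPolynomial.C (ε : ℂ) * (MvPolynomial.X 1) ^ (2 * s) * (MvPolynomial.X 0) ^ s :
            MvPolynomial (Fin 2) ℂ)) ∧
      ∀ i j, i ≠ j → ∀ t : ℂ, c i ≠ t • c j)
    (q : ℕ) (p : Fin q → ℕ) (hp : ∀ i, (p i).Prime) (hpmono : StrictMono p)
    (b : ℤ) (hb : b ≠ 0) (l : ℕ) (A : Fin l → ℕ) (hA : ∀ i, 0 < A i) :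
    {t : (Fin q → ℕ) × (Fin l → ℕ) × ℤ × ℤ | (∀ j, 0 < t.2.1 j) ∧
      Int.gcd t.2.2.1 t.2.2.2 = 1 ∧
      b * (∏ j, (p j : ℤ) ^ t.1 j) *
          ∏ i, (((t.2.1 i).factorial : ℤ) * (A i : ℤ) ^ (t.2.1 i)) =
        t.2.2.1 ^ (2 * s) * t.2.2.2 ^ s + ε * t.2.2.2 ^ (2 * s) * t.2.2.1 ^ s}.Finite :=
  stmt_11_general hsz s hs ε hε q p hp b hb l A hA
end

section
/- Assume the ABC-conjecture. Then the equation n! = x²·y + y²·x has only finitely many solutions in positive integers n and integers x, y with gcd(x,y) = 1; the same holds for the equation n! = y²·x − x²·y. -/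
/-- The ABC-conjecture: for every `ε > 0` there is a constant `K(ε) > 0` such that for all
non-zero pairwise coprime integers `A, B, C` with `A + B = C` one has
`max (|A|, |B|, |C|) < K(ε) * rad (A*B*C) ^ (1+ε)`. -/
def ABCConjecture : Prop :=
  ∀ ε : ℝ, 0 < ε → ∃ K : ℝ, 0 < K ∧ ∀ A B C : ℤ, A ≠ 0 → B ≠ 0 → C ≠ 0 →
    IsCoprime A B → IsCoprime A C → IsCoprime B C → A + B = C →
    ((max (max |A| |B|) |C| : ℤ) : ℝ) < K * (rad (A * B * C) : ℝ) ^ (1 + ε)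

lemma radFact (n : ℕ) : (∏ p ∈ (n.factorial).primeFactors, p) ≤ 4 ^ n := by
  have h : (n.factorial).primeFactors = Finset.filter (fun p => p.Prime) (Finset.range (n+1)) := by
    ext p
    simp only [Nat.mem_primeFactors, Nat.factorial_ne_zero, ne_eq, not_false_eq_true,
      and_true, Finset.mem_filter, Finset.mem_range, Nat.lt_succ_iff]
    constructor
    · rintro ⟨hp, hd⟩; exact ⟨(hp.dvd_factorial).1 hd, hp⟩
    · rintro ⟨hle, hp⟩; exact ⟨hp, hp.dvd_factorial.2 hle⟩
  rw [h]
  exact primorial_le_4_pow n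

lemma key (habc : ABCConjecture) : ∃ N : ℕ, ∀ (n : ℕ) (a b : ℤ), IsCoprime a b →
    (a * b * (a + b)).natAbs = n.factorial → n < N := by
  obtain ⟨K, hK, hABC⟩ := habc 1 one_pos
  have htend := FloorSemiring.tendsto_pow_div_factorial_atTop (K := ℝ) 4096
  have hev : ∀ᶠ n : ℕ in Filter.atTop, (4096 : ℝ) ^ n / n.factorial < 1 / K ^ 3 := by
    have : (0:ℝ) < 1 / K ^ 3 := by positivity
    exact htend.eventually (gt_mem_nhds this)
  obtain ⟨N, hN⟩ := hev.exists_forall_of_atTop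
  refine ⟨N, fun n a b hcop heq => ?_⟩
  by_contra hcon
  push_neg at hcon
  have hNlt := hN n hcon
  -- pieces nonzero
  have hne : a * b * (a + b) ≠ 0 := by
    intro h; rw [h] at heq; simp at heq; exact (Nat.factorial_ne_zero n) heq.symm
  have ha : a ≠ 0 := fun h => hne (by rw [h]; ring)
  have hb : b ≠ 0 := fun h => hne (by rw [h]; ring)
  have hc : a + b ≠ 0 := fun h => hne (by rw [h]; ring)
  have hac : IsCoprime a (a + b) := by
    have := hcop.add_mul_left_right 1; simpa [add_comm] using this
  have hbc : IsCoprime b (a + b) := by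
    have := hcop.symm.add_mul_left_right 1; simpa [add_comm] using this
  have hmax := hABC a b (a + b) ha hb hc hcop hac hbc rfl
  -- rad bound
  have hrad : rad (a * b * (a + b)) ≤ 4 ^ n := by
    unfold rad; rw [heq]; exact radFact n
  set M : ℤ := max (max |a| |b|) |a + b| with hM
  have hMa : |a| ≤ M := le_trans (le_max_left _ _) (le_max_left _ _)
  have hMb : |b| ≤ M := le_trans (le_max_right _ _) (le_max_left _ _)
  have hMc : |a + b| ≤ M := le_max_right _ _
  have hM0 : (0:ℤ) ≤ M := le_trans (abs_nonneg a) hMa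
  have hfacM : (n.factorial : ℤ) ≤ M ^ 3 := by
    have : (n.factorial : ℤ) = |a| * |b| * |a + b| := by
      rw [← abs_mul, ← abs_mul, Int.abs_eq_natAbs, heq]
    rw [this]
    calc |a| * |b| * |a + b| ≤ M * M * M := by
          gcongr <;> first | exact abs_nonneg _ | assumption
      _ = M ^ 3 := by ring
  -- real bounds
  have hMR : (M : ℝ) < K * (4:ℝ) ^ n * (4:ℝ) ^ n := by
    have h2 : (rad (a * b * (a + b)) : ℝ) ^ ((1:ℝ) + 1) = (rad (a * b * (a + b)) : ℝ) ^ (2:ℕ) := by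
      rw [show (1:ℝ) + 1 = ((2:ℕ) : ℝ) by norm_num, Real.rpow_natCast]
    rw [h2] at hmax
    calc (M : ℝ) < K * (rad (a * b * (a + b)) : ℝ) ^ (2:ℕ) := hmax
      _ ≤ K * ((4:ℝ) ^ n) ^ (2:ℕ) := by
          gcongr
          exact_mod_cast hrad
      _ = K * (4:ℝ) ^ n * (4:ℝ) ^ n := by ring
  have hfacR : (n.factorial : ℝ) ≤ (M : ℝ) ^ 3 := by exact_mod_cast hfacM
  have hM0R : (0:ℝ) ≤ (M:ℝ) := by exact_mod_cast hM0
  have h3 : (M : ℝ) ^ 3 < (K * (4:ℝ) ^ n * (4:ℝ) ^ n) ^ 3 :=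
    pow_lt_pow_left₀ hMR hM0R (by norm_num)
  have hfinal : (n.factorial : ℝ) < K ^ 3 * (4096:ℝ) ^ n := by
    calc (n.factorial : ℝ) ≤ (M:ℝ)^3 := hfacR
      _ < (K * (4:ℝ) ^ n * (4:ℝ) ^ n) ^ 3 := h3
      _ = K ^ 3 * (4096:ℝ) ^ n := by
          rw [show (4096:ℝ) = 4 ^ 6 by norm_num, ← pow_mul, show 6 * n = n * 6 by ring, pow_mul]
          ring
  -- contradiction with hNlt
  have hfpos : (0:ℝ) < (n.factorial : ℝ) := by exact_mod_cast n.factorial_pos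
  rw [div_lt_div_iff₀ hfpos (by positivity)] at hNlt
  have : K ^ 3 * (4096:ℝ) ^ n < (n.factorial : ℝ) := by nlinarith [hNlt]
  linarith

lemma dvd_mem_Icc {m : ℕ} {x : ℤ} (h : x ∣ (m.factorial : ℤ)) :
    x ∈ Set.Icc (-(m.factorial : ℤ)) (m.factorial : ℤ) := by
  have habs : |x| ≤ (m.factorial : ℤ) :=
    Int.le_of_dvd (by exact_mod_cast m.factorial_pos) ((abs_dvd _ _).2 h)
  have := abs_le.mp habs
  exact ⟨this.1, this.2⟩

/-- Assuming the ABC-conjecture, the equation `n! = x² y + y² x` has only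
finitely many solutions in positive integers `n` and coprime integers `x, y`; the same holds
for `n! = y² x - x² y`. -/
theorem stmt_12 (habc : ABCConjecture) :
    {t : ℕ × ℤ × ℤ | 0 < t.1 ∧ Int.gcd t.2.1 t.2.2 = 1 ∧
      (t.1.factorial : ℤ) = t.2.1 ^ 2 * t.2.2 + t.2.2 ^ 2 * t.2.1}.Finite ∧
    {t : ℕ × ℤ × ℤ | 0 < t.1 ∧ Int.gcd t.2.1 t.2.2 = 1 ∧
      (t.1.factorial : ℤ) = t.2.2 ^ 2 * t.2.1 - t.2.1 ^ 2 * t.2.2}.Finite := by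
  obtain ⟨N, hN⟩ := key habc
  have hbig : (⋃ n ∈ Set.Iio N, (({n} : Set ℕ) ×ˢ
      (Set.Icc (-(n.factorial : ℤ)) (n.factorial : ℤ) ×ˢ
       Set.Icc (-(n.factorial : ℤ)) (n.factorial : ℤ)))).Finite :=
    Set.Finite.biUnion (Set.finite_Iio N) fun n _ =>
      (Set.finite_singleton n).prod ((Set.finite_Icc _ _).prod (Set.finite_Icc _ _))
  constructor
  · refine hbig.subset ?_
    rintro ⟨n, x, y⟩ ⟨-, hg, heq⟩
    have hcop : IsCoprime x y := Int.isCoprime_iff_gcd_eq_one.2 hg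
    have hnat : (x * y * (x + y)).natAbs = n.factorial := by
      have : x * y * (x + y) = (n.factorial : ℤ) := by linarith [heq, (by ring : x * y * (x + y) = x ^ 2 * y + y ^ 2 * x)]
      rw [this]; exact Int.natAbs_natCast _
    have hlt := hN n x y hcop hnat
    simp only [Set.mem_iUnion, Set.mem_prod, Set.mem_singleton_iff]
    refine ⟨n, hlt, rfl, dvd_mem_Icc ⟨y * (x + y), by linarith [(by ring : x * (y * (x + y)) = x ^ 2 * y + y ^ 2 * x)]⟩,
      dvd_mem_Icc ⟨x * (x + y), by linarith [(by ring : y * (x * (x + y)) = x ^ 2 * y + y ^ 2 * x)]⟩⟩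
  · refine hbig.subset ?_
    rintro ⟨n, x, y⟩ ⟨-, hg, heq⟩
    have hcop : IsCoprime (-x) y := (Int.isCoprime_iff_gcd_eq_one.2 hg).neg_left
    have hnat : ((-x) * y * ((-x) + y)).natAbs = n.factorial := by
      have : (-x) * y * ((-x) + y) = -(n.factorial : ℤ) := by
        linarith [heq, (by ring : (-x) * y * ((-x) + y) = -(y ^ 2 * x - x ^ 2 * y))]
      rw [this, Int.natAbs_neg]; exact Int.natAbs_natCast _
    have hlt := hN n (-x) y hcop hnat
    simp only [Set.mem_iUnion, Set.mem_prod, Set.mem_singleton_iff]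
    refine ⟨n, hlt, rfl, dvd_mem_Icc ⟨y ^ 2 - x * y, by linarith [(by ring : x * (y ^ 2 - x * y) = y ^ 2 * x - x ^ 2 * y)]⟩,
      dvd_mem_Icc ⟨x * y - x ^ 2, by linarith [(by ring : y * (x * y - x ^ 2) = y ^ 2 * x - x ^ 2 * y)]⟩⟩
end

section
/- Assume the weak form of Szpiro's conjecture. Then the equation x²·y + y²·x = 7^m·n! has only finitely many solutions in positive integers m, n and integers x, y with gcd(x,y) = 1; the same holds for the equation x²·y − y²·x = 7^m·n!. -/
open Nat Filter

theorem rad_le_four_pow {z : ℤ} {N : ℕ} (h : ∀ p ∈ z.natAbs.primeFactors, p ≤ N) :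
    rad z ≤ 4 ^ N := by
  have hsub : z.natAbs.primeFactors ⊆ {p ∈ Finset.range (N + 1) | p.Prime} := fun p hp ↦
    Finset.mem_filter.mpr
      ⟨Finset.mem_range_succ_iff.mpr (h p hp), Nat.prime_of_mem_primeFactors hp⟩
  calc rad z ≤ primorial N :=
        Finset.prod_le_prod_of_subset_of_one_le' hsub fun p hp _ ↦
          (Finset.mem_filter.mp hp).2.one_lt.le
    _ ≤ 4 ^ N := primorial_le_four_pow N

theorem le_add_of_mem_primeFactors_pow_mul_factorial {a m n p : ℕ}
    (hp : p ∈ (a ^ m * n !).primeFactors) : p ≤ a + n := by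
  obtain ⟨hpp, hdvd, hne⟩ := Nat.mem_primeFactors.mp hp
  rcases hpp.dvd_mul.mp hdvd with ha | hn
  · have ha0 : 0 < a := Nat.pos_of_ne_zero fun h ↦ by
      subst h; cases m <;> simp_all [Nat.not_prime_one]
    exact (Nat.le_of_dvd ha0 (hpp.dvd_of_dvd_pow ha)).trans (le_add_right _ _)
  · exact ((hpp.dvd_factorial).mp hn).trans (le_add_left _ _)

theorem WeakSzpiroConjecture.exists_natAbs_lt_pow (hsz : WeakSzpiroConjecture) :
    ∃ b : ℕ, 0 < b ∧ ∀ (A B : ℤ) (N : ℕ), IsCoprime A B → A * B * (A + B) ≠ 0 →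
      (∀ p ∈ (A * B * (A + B)).natAbs.primeFactors, p ≤ N) →
      (A * B * (A + B)).natAbs < b ^ N := by
  obtain ⟨s, hs, hszpiro⟩ := hsz
  refine ⟨4 ^ ⌈s⌉₊, by positivity, fun A B N hAB hABC hN ↦ ?_⟩
  have hA : A ≠ 0 := by rintro rfl; simp at hABC
  have hB : B ≠ 0 := by rintro rfl; simp at hABC
  have hC : A + B ≠ 0 := by intro h; simp [h] at hABC
  have hAC : IsCoprime A (A + B) := by simpa [add_comm] using hAB.add_mul_left_right 1
  have hBC : IsCoprime B (A + B) := by simpa using hAB.symm.add_mul_left_right 1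
  have hlt := hszpiro A B (A + B) hA hB hC hAB hAC hBC rfl
  rw [← Nat.cast_natAbs] at hlt
  have hrad : (rad (A * B * (A + B)) : ℝ) ≤ 4 ^ N := by exact_mod_cast rad_le_four_pow hN
  have : ((A * B * (A + B)).natAbs : ℝ) < ((4 ^ ⌈s⌉₊ : ℕ) : ℝ) ^ N :=
    calc ((A * B * (A + B)).natAbs : ℝ) < (rad (A * B * (A + B)) : ℝ) ^ s := by
          exact_mod_cast hlt
      _ ≤ ((4 : ℝ) ^ N) ^ s := Real.rpow_le_rpow (by positivity) hrad hs.le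
      _ ≤ ((4 : ℝ) ^ N) ^ (⌈s⌉₊ : ℝ) :=
          Real.rpow_le_rpow_of_exponent_le (one_le_pow₀ (by norm_num)) (Nat.le_ceil s)
      _ = ((4 ^ ⌈s⌉₊ : ℕ) : ℝ) ^ N := by
          rw [Real.rpow_natCast]; push_cast; rw [← pow_mul, ← pow_mul, mul_comm]
  exact_mod_cast this

theorem WeakSzpiroConjecture.exists_bound_pow_mul_factorial (hsz : WeakSzpiroConjecture)
    (a : ℕ) : ∃ M : ℕ, ∀ (m n : ℕ) (A B : ℤ), IsCoprime A B →
      A * B * (A + B) = (a : ℤ) ^ m * (n ! : ℤ) → a ^ m * n ! ≤ M := by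
  obtain ⟨b, hb, hbound⟩ := hsz.exists_natAbs_lt_pow
  obtain ⟨N₀, hN₀⟩ := eventually_atTop.mp (Nat.eventually_mul_pow_lt_factorial_sub (b ^ a) b 0)
  refine ⟨b ^ (a + N₀), fun m n A B hAB h ↦ ?_⟩
  have hnatAbs : (A * B * (A + B)).natAbs = a ^ m * n ! := by
    rw [h]; exact_mod_cast Int.natAbs_natCast _
  rcases Nat.eq_zero_or_pos (a ^ m * n !) with h0 | hpos
  · exact h0 ▸ Nat.zero_le _
  have hlt : a ^ m * n ! < b ^ (a + n) := by
    rw [← hnatAbs]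
    refine hbound A B (a + n) hAB (by omega) fun p hp ↦ ?_
    exact le_add_of_mem_primeFactors_pow_mul_factorial (hnatAbs ▸ hp)
  have hn : n < N₀ := by
    by_contra! hn
    have hfac := hN₀ n hn
    rw [Nat.sub_zero, ← pow_add] at hfac
    have : n ! ≤ a ^ m * n ! := Nat.le_mul_of_pos_left _ (Nat.pos_of_mul_pos_right hpos)
    omega
  exact hlt.le.trans (Nat.pow_le_pow_right hb (by omega))

theorem WeakSzpiroConjecture.finite_setOf_dvd_pow_mul_factorial (hsz : WeakSzpiroConjecture)
    {a : ℕ} (ha : 1 < a) :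
    {t : ℕ × ℕ × ℤ × ℤ | ∃ A B : ℤ, IsCoprime A B ∧
      A * B * (A + B) = (a : ℤ) ^ t.1 * (t.2.1 ! : ℤ) ∧
      t.2.2.1 ∣ (a : ℤ) ^ t.1 * (t.2.1 ! : ℤ) ∧
      t.2.2.2 ∣ (a : ℤ) ^ t.1 * (t.2.1 ! : ℤ)}.Finite := by
  obtain ⟨M, hM⟩ := hsz.exists_bound_pow_mul_factorial a
  refine ((Set.finite_Iic M).prod <| (Set.finite_Iic M).prod <|
    (Set.finite_Icc (-(M : ℤ)) M).prod (Set.finite_Icc (-(M : ℤ)) M)).subset ?_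
  rintro ⟨m, n, x, y⟩ ⟨A, B, hAB, h, hx, hy⟩
  have hle := hM m n A B hAB h
  have hne : (a : ℤ) ^ m * (n ! : ℤ) ≠ 0 := by positivity
  have hcast : ((a : ℤ) ^ m * (n ! : ℤ)).natAbs = a ^ m * n ! := by
    exact_mod_cast Int.natAbs_natCast _
  have hx' : x.natAbs ≤ a ^ m * n ! := hcast ▸ Int.natAbs_le_of_dvd_ne_zero hx hne
  have hy' : y.natAbs ≤ a ^ m * n ! := hcast ▸ Int.natAbs_le_of_dvd_ne_zero hy hne
  have hm : m < a ^ m * n ! :=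
    (Nat.lt_pow_self ha).trans_le (Nat.le_mul_of_pos_right _ n.factorial_pos)
  have hn : n ≤ a ^ m * n ! :=
    n.self_le_factorial.trans (Nat.le_mul_of_pos_left _ (Nat.pow_pos (by omega)))
  simp only [Set.mem_prod, Set.mem_Iic, Set.mem_Icc]
  omega

/-- Assuming the weak form of Szpiro's conjecture, the equation
`x² y + y² x = 7^m n!` has only finitely many solutions in positive integers `m, n` and
coprime integers `x, y`; the same holds for `x² y - y² x = 7^m n!`. -/
theorem stmt_13 (hsz : WeakSzpiroConjecture) :
    {t : ℕ × ℕ × ℤ × ℤ | 0 < t.1 ∧ 0 < t.2.1 ∧ Int.gcd t.2.2.1 t.2.2.2 = 1 ∧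
      t.2.2.1 ^ 2 * t.2.2.2 + t.2.2.2 ^ 2 * t.2.2.1 =
        (7 : ℤ) ^ t.1 * (t.2.1.factorial : ℤ)}.Finite ∧
    {t : ℕ × ℕ × ℤ × ℤ | 0 < t.1 ∧ 0 < t.2.1 ∧ Int.gcd t.2.2.1 t.2.2.2 = 1 ∧
      t.2.2.1 ^ 2 * t.2.2.2 - t.2.2.2 ^ 2 * t.2.2.1 =
        (7 : ℤ) ^ t.1 * (t.2.1.factorial : ℤ)}.Finite := by
  have hfin := hsz.finite_setOf_dvd_pow_mul_factorial (a := 7) (by norm_num)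
  push_cast at hfin
  refine ⟨hfin.subset ?_, hfin.subset ?_⟩
  · rintro ⟨m, n, x, y⟩ ⟨-, -, hxy, h⟩
    exact ⟨x, y, Int.isCoprime_iff_gcd_eq_one.mpr hxy, by linear_combination h,
      h ▸ Dvd.intro (x * y + y ^ 2) (by ring), h ▸ Dvd.intro (x ^ 2 + x * y) (by ring)⟩
  · rintro ⟨m, n, x, y⟩ ⟨-, -, hxy, h⟩
    have hcop : IsCoprime y (x - y) := by
      simpa [sub_eq_add_neg, add_comm] using
        (Int.isCoprime_iff_gcd_eq_one.mpr hxy).symm.add_mul_left_right (-1)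
    exact ⟨y, x - y, hcop, by linear_combination h,
      h ▸ Dvd.intro (x * y - y ^ 2) (by ring), h ▸ Dvd.intro (x ^ 2 - x * y) (by ring)⟩
end

section
/- Let b be a non-zero integer, A a positive integer, and d ≥ 2 an integer. If n is a positive integer with n > 2·max(A, |b|), then b·n!·A^n is not a d-th power of an integer, i.e., there is no integer x with b·n!·A^n = x^d. -/
/-!
By Bertrand's postulate there is a prime `p` with `n / 2 < p ≤ n`. Since `n < 2 * p`, `p` divides
`n!` exactly once, and since `p > max A |b|` it divides neither `b` nor `A`. So the `p`-adic
valuation of `b * n! * A ^ n` is `1`, whereas that of a `d`-th power is a multiple of `d ≥ 2`.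
-/

open Nat

theorem exists_prime_half_lt_and_le {n : ℕ} (hn : 2 ≤ n) : ∃ p, p.Prime ∧ n / 2 < p ∧ p ≤ n := by
  obtain ⟨p, hp, hlt, hle⟩ := exists_prime_lt_and_le_two_mul (n / 2) (by omega)
  exact ⟨p, hp, hlt, by omega⟩

section padicValNat

variable {p : ℕ} [Fact p.Prime]

theorem padicValNat_factorial_eq_one {n : ℕ} (hpn : p ≤ n) (hnp : n < 2 * p) :
    padicValNat p n ! = 1 := by
  have hdiv : n / p = 1 := Nat.div_eq_of_lt_le (by omega) (by omega)
  rw [← padicValNat_mul_div_factorial, hdiv, padicValNat_factorial_mul]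
  simp

theorem padicValNat_mul_of_not_dvd_left {a : ℕ} (ha : ¬p ∣ a) (b : ℕ) :
    padicValNat p (a * b) = padicValNat p b := by
  rcases eq_or_ne b 0 with rfl | hb
  · simp
  · rw [padicValNat.mul (by rintro rfl; exact ha (dvd_zero p)) hb,
      padicValNat.eq_zero_of_not_dvd ha, zero_add]

theorem padicValNat_pow_ne_one (x : ℕ) {d : ℕ} (hd : 2 ≤ d) : padicValNat p (x ^ d) ≠ 1 := by
  rw [padicValNat.pow, Ne, mul_eq_one]
  omega

end padicValNat

theorem stmt_15_general (b : ℤ) (hb : b ≠ 0) (A : ℕ) (hA : 0 < A) (d : ℕ) (hd : 2 ≤ d)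
    (n : ℕ) (h : 2 * max A b.natAbs < n) :
    ¬∃ x : ℤ, b * (n.factorial : ℤ) * (A : ℤ) ^ n = x ^ d := by
  rintro ⟨x, hx⟩
  have hA_le := le_max_left A b.natAbs
  have hb_le := le_max_right A b.natAbs
  obtain ⟨p, hp, hnp, hpn⟩ := exists_prime_half_lt_and_le (n := n) (by omega)
  have : Fact p.Prime := ⟨hp⟩
  have hpb : ¬p ∣ b.natAbs := Nat.not_dvd_of_pos_of_lt (Int.natAbs_pos.mpr hb) (by omega)
  have hpA : ¬p ∣ A ^ n := fun hdvd ↦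
    Nat.not_dvd_of_pos_of_lt hA (by omega) (hp.dvd_of_dvd_pow hdvd)
  have hval : padicValNat p (b.natAbs * n ! * A ^ n) = 1 := by
    rw [mul_comm, padicValNat_mul_of_not_dvd_left hpA,
      padicValNat_mul_of_not_dvd_left hpb, padicValNat_factorial_eq_one hpn (by omega)]
  have hnat : b.natAbs * n ! * A ^ n = x.natAbs ^ d := by
    simpa [Int.natAbs_mul, Int.natAbs_pow] using congrArg Int.natAbs hx
  exact padicValNat_pow_ne_one x.natAbs hd (hnat ▸ hval)

/-- Let `b` be a non-zero integer, `A` a positive integer and `d ≥ 2` an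
integer. If `n` is a positive integer with `n > 2 * max A |b|`, then `b * n! * A^n` is not a
`d`-th power of an integer. -/
theorem stmt_15 (b : ℤ) (hb : b ≠ 0) (A : ℕ) (hA : 0 < A) (d : ℕ) (hd : 2 ≤ d)
    (n : ℕ) (hn : 0 < n) (h : 2 * max A b.natAbs < n) :
    ¬∃ x : ℤ, b * (n.factorial : ℤ) * (A : ℤ) ^ n = x ^ d :=
  stmt_15_general b hb A hA d hd n h
end

section
/- Let b be a non-zero integer, A and B positive integers, and d ≥ 3 an integer. If n and m are positive integers with max(n,m) > 2·max(A, B, |b|), then b·n!·A^n·m!·B^m is not a d-th power of an integer, i.e., there is no integer x with b·n!·A^n·m!·B^m = x^d. -/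
/-!
By Bertrand's postulate there is a prime `p` with `max n m < 2 p ≤ 2 max n m`. Then `p` exceeds
`|b|`, `A` and `B`, and Legendre's formula gives `v_p(k!) = k / p` for `k < p ^ 2`, so the
`p`-adic valuation of `b n! Aⁿ m! Bᵐ` is `n / p + m / p`, which lies in `{1, 2}`. The valuation of a
`d`-th power is a multiple of `d ≥ 3`.
-/

open Nat

namespace Nat

theorem factorization_factorial_eq_div {p k : ℕ} (hp : p.Prime) (hk : k < p ^ 2) :
    (k !).factorization p = k / p := by
  rw [factorization_factorial hp (log_lt_of_lt_pow' two_ne_zero hk)]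
  simp

theorem exists_prime_lt_two_mul_and_le {N : ℕ} (hN : 2 ≤ N) :
    ∃ p, p.Prime ∧ N < 2 * p ∧ p ≤ N := by
  obtain ⟨p, hp, hlt, hle⟩ := exists_prime_lt_and_le_two_mul (N / 2) (by omega)
  exact ⟨p, hp, by omega, by omega⟩

theorem factorization_mul_factorial_mul_pow_mul_factorial_mul_pow {p c A B n m : ℕ}
    (hp : p.Prime) (hc : c ≠ 0) (hcp : c < p) (hA : A ≠ 0) (hAp : A < p) (hB : B ≠ 0)
    (hBp : B < p) (hn : n < p ^ 2) (hm : m < p ^ 2) :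
    (c * n ! * A ^ n * m ! * B ^ m).factorization p = n / p + m / p := by
  have hc0 := factorization_eq_zero_of_lt hcp
  have hA0 := factorization_eq_zero_of_lt hAp
  have hB0 := factorization_eq_zero_of_lt hBp
  simp [factorization_mul, factorization_pow, factorial_ne_zero, hc, hA, hB, hc0, hA0, hB0,
    factorization_factorial_eq_div hp hn, factorization_factorial_eq_div hp hm]

theorem ne_pow_of_factorization_pos_of_lt {a x d p : ℕ} (hpos : 0 < a.factorization p)
    (hlt : a.factorization p < d) : a ≠ x ^ d := by
  rintro rfl
  rw [factorization_pow, Finsupp.smul_apply, smul_eq_mul] at hpos hlt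
  nlinarith [Nat.pos_of_mul_pos_left hpos]

end Nat

theorem stmt_16_general (b : ℤ) (hb : b ≠ 0) (A B : ℕ) (hA : 0 < A) (hB : 0 < B)
    (d : ℕ) (hd : 3 ≤ d) (n m : ℕ)
    (h : 2 * max (max A B) b.natAbs < max n m) :
    ¬∃ x : ℤ, b * (n.factorial : ℤ) * (A : ℤ) ^ n * (m.factorial : ℤ) * (B : ℤ) ^ m
      = x ^ d := by
  rintro ⟨x, hx⟩
  obtain ⟨p, hp, hNp, hpN⟩ := exists_prime_lt_two_mul_and_le (N := max n m) (by omega)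
  have hp2 : 2 * p ≤ p ^ 2 := by nlinarith [hp.two_le]
  have hval : (b.natAbs * n ! * A ^ n * m ! * B ^ m).factorization p = n / p + m / p :=
    factorization_mul_factorial_mul_pow_mul_factorial_mul_pow hp (by omega) (by omega)
      hA.ne' (by omega) hB.ne' (by omega) (by omega) (by omega)
  have hpos : 0 < n / p + m / p := by
    rcases le_total n m with hnm | hmn
    · exact Nat.add_pos_right _ (Nat.div_pos (by omega) hp.pos)
    · exact Nat.add_pos_left (Nat.div_pos (by omega) hp.pos) _
  have hle : n / p + m / p ≤ 2 := by
    have : n / p < 2 := Nat.div_lt_of_lt_mul (by omega)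
    have : m / p < 2 := Nat.div_lt_of_lt_mul (by omega)
    omega
  refine ne_pow_of_factorization_pos_of_lt (x := x.natAbs) (d := d) (by rw [hval]; exact hpos)
    (by rw [hval]; omega) ?_
  simpa only [Int.natAbs_mul, Int.natAbs_pow, Int.natAbs_natCast] using congrArg Int.natAbs hx

/-- Let `b` be a non-zero integer, `A, B` positive integers and `d ≥ 3` an
integer. If `n, m` are positive integers with `max n m > 2 * max (max A B) |b|`, then
`b * n! * A^n * m! * B^m` is not a `d`-th power of an integer. -/
theorem stmt_16 (b : ℤ) (hb : b ≠ 0) (A B : ℕ) (hA : 0 < A) (hB : 0 < B)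
    (d : ℕ) (hd : 3 ≤ d) (n m : ℕ) (hn : 0 < n) (hm : 0 < m)
    (h : 2 * max (max A B) b.natAbs < max n m) :
    ¬∃ x : ℤ, b * (n.factorial : ℤ) * (A : ℤ) ^ n * (m.factorial : ℤ) * (B : ℤ) ^ m
      = x ^ d :=
  stmt_16_general b hb A B hA hB d hd n m h
end
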